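/- Suppose p, q : [0,T] × ℝⁿ → (0,∞) are smooth positive solutions of the same Fokker–Planck equation ∂u/∂t + ∇·(b₊u) - (σ²/2)Δu = 0. Then the ratio h = q/p satisfies the backward equation ∂h/∂t + b₋·∇h - (σ²/2)Δh = 0, where b₋ = b₊ - σ²∇ln p. -/

import Mathlib

open Real
open scoped RealInnerProductSpace

noncomputable section

variable {n : ℕ}

/-- Divergence of a vector field on Euclidean space. -/
def diverg (b : EuclideanSpace ℝ (Fin n) → EuclideanSpace ℝ (Fin n))
    (x : EuclideanSpace ℝ (Fin n)) : ℝ :=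
  ∑ i : Fin n, fderiv ℝ b x (EuclideanSpace.single i (1 : ℝ)) i

/-- Laplacian of a scalar field on Euclidean space. -/
def laplacian (f : EuclideanSpace ℝ (Fin n) → ℝ)
    (x : EuclideanSpace ℝ (Fin n)) : ℝ :=
  ∑ i : Fin n, fderiv ℝ (fun y => fderiv ℝ f y (EuclideanSpace.single i (1 : ℝ))) x
    (EuclideanSpace.single i (1 : ℝ))

lemma fderivMulApply (f g : EuclideanSpace ℝ (Fin n) → ℝ) {x : EuclideanSpace ℝ (Fin n)}
    (hf : DifferentiableAt ℝ f x) (hg : DifferentiableAt ℝ g x) (v : EuclideanSpace ℝ (Fin n)) :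
    fderiv ℝ (fun y => f y * g y) x v
      = fderiv ℝ f x v * g x + f x * fderiv ℝ g x v := by
  rw [fderiv_fun_mul hf hg]
  simp [smul_eq_mul]
  ring

lemma smoothFderivApply (f : EuclideanSpace ℝ (Fin n) → ℝ) (hf : ContDiff ℝ (⊤ : ℕ∞) f)
    (v : EuclideanSpace ℝ (Fin n)) : ContDiff ℝ (⊤ : ℕ∞) fun y => fderiv ℝ f y v :=
  (hf.fderiv_right (by simp)).clm_apply contDiff_const

lemma secondMul (f g : EuclideanSpace ℝ (Fin n) → ℝ)
    (hf : ContDiff ℝ (⊤ : ℕ∞) f) (hg : ContDiff ℝ (⊤ : ℕ∞) g) (x v : EuclideanSpace ℝ (Fin n)) :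
    fderiv ℝ (fun y => fderiv ℝ (fun z => f z * g z) y v) x v
      = fderiv ℝ (fun y => fderiv ℝ f y v) x v * g x
        + 2 * (fderiv ℝ f x v * fderiv ℝ g x v)
        + f x * fderiv ℝ (fun y => fderiv ℝ g y v) x v := by
  have hfd : Differentiable ℝ f := hf.differentiable (by simp)
  have hgd : Differentiable ℝ g := hg.differentiable (by simp)
  have hf' : ContDiff ℝ (⊤ : ℕ∞) fun y => fderiv ℝ f y v := smoothFderivApply f hf v
  have hg' : ContDiff ℝ (⊤ : ℕ∞) fun y => fderiv ℝ g y v := smoothFderivApply g hg v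
  have h1 : (fun y => fderiv ℝ (fun z => f z * g z) y v)
      = fun y => fderiv ℝ f y v * g y + f y * fderiv ℝ g y v :=
    funext fun y => fderivMulApply f g (hfd y) (hgd y) v
  rw [h1]
  have d1 : DifferentiableAt ℝ (fun y => fderiv ℝ f y v * g y) x :=
    ((hf'.differentiable (by simp)) x).mul (hgd x)
  have d2 : DifferentiableAt ℝ (fun y => f y * fderiv ℝ g y v) x :=
    (hfd x).mul ((hg'.differentiable (by simp)) x)
  rw [fderiv_fun_add d1 d2, ContinuousLinearMap.add_apply,
    fderivMulApply _ _ ((hf'.differentiable (by simp)) x) (hgd x) v,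
    fderivMulApply _ _ (hfd x) ((hg'.differentiable (by simp)) x) v]
  ring

lemma divergSmul (f : EuclideanSpace ℝ (Fin n) → ℝ)
    (c : EuclideanSpace ℝ (Fin n) → EuclideanSpace ℝ (Fin n))
    (hf : Differentiable ℝ f) (hc : Differentiable ℝ c) (x : EuclideanSpace ℝ (Fin n)) :
    diverg (fun y => f y • c y) x
      = (∑ i : Fin n, fderiv ℝ f x (EuclideanSpace.single i (1 : ℝ)) * c x i)
        + f x * diverg c x := by
  unfold diverg
  rw [Finset.mul_sum, ← Finset.sum_add_distrib]
  refine Finset.sum_congr rfl fun i _ => ?_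
  rw [fderiv_fun_smul (hf x) (hc x)]
  simp [smul_eq_mul]
  ring

lemma gradCoord (f : EuclideanSpace ℝ (Fin n) → ℝ) (x : EuclideanSpace ℝ (Fin n)) (i : Fin n) :
    gradient f x i = fderiv ℝ f x (EuclideanSpace.single i (1 : ℝ)) := by
  have h : ⟪gradient f x, EuclideanSpace.single i (1 : ℝ)⟫
      = fderiv ℝ f x (EuclideanSpace.single i (1 : ℝ)) := by
    rw [gradient]
    exact InnerProductSpace.toDual_symm_apply
  rw [← h, EuclideanSpace.inner_single_right]
  simp

lemma fderivLogApply (f : EuclideanSpace ℝ (Fin n) → ℝ) (x v : EuclideanSpace ℝ (Fin n))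
    (hf : DifferentiableAt ℝ f x) (hx : f x ≠ 0) :
    fderiv ℝ (fun y => Real.log (f y)) x v = (f x)⁻¹ * fderiv ℝ f x v := by
  rw [(hf.hasFDerivAt.log hx).fderiv]
  simp

lemma ratio_aux (T : ℝ) (σ : ℝ)
    (b : ℝ → EuclideanSpace ℝ (Fin n) → EuclideanSpace ℝ (Fin n))
    (p q h : ℝ → EuclideanSpace ℝ (Fin n) → ℝ)
    (hb : ContDiff ℝ (⊤ : ℕ∞) (Function.uncurry b))
    (hp_smooth : ContDiff ℝ (⊤ : ℕ∞) (Function.uncurry p))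
    (hh : ContDiff ℝ (⊤ : ℕ∞) (Function.uncurry h))
    (hp_pos : ∀ t x, 0 < p t x)
    (hq_eq : q = fun s y => h s y * p s y)
    (hpFP : ∀ t ∈ Set.Icc 0 T, ∀ x,
      deriv (fun s => p s x) t + diverg (fun y => p t y • b t y) x -
        (σ ^ 2 / 2) * laplacian (p t) x = 0)
    (hqFP : ∀ t ∈ Set.Icc 0 T, ∀ x,
      deriv (fun s => q s x) t + diverg (fun y => q t y • b t y) x -
        (σ ^ 2 / 2) * laplacian (q t) x = 0) :
    ∀ t ∈ Set.Icc 0 T, ∀ x,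
      deriv (fun s => h s x) t +
          ⟪b t x - σ ^ 2 • gradient (fun y => Real.log (p t y)) x,
            gradient (h t) x⟫ -
          (σ ^ 2 / 2) * laplacian (h t) x = 0 := by
  intro t htT x
  have hPx : p t x ≠ 0 := (hp_pos t x).ne'
  -- smoothness in space
  have hpt : ContDiff ℝ (⊤ : ℕ∞) (p t) := hp_smooth.comp (contDiff_const.prodMk contDiff_id)
  have hht : ContDiff ℝ (⊤ : ℕ∞) (h t) := hh.comp (contDiff_const.prodMk contDiff_id)
  have hbt : ContDiff ℝ (⊤ : ℕ∞) (b t) := hb.comp (contDiff_const.prodMk contDiff_id)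
  have hptd : Differentiable ℝ (p t) := hpt.differentiable (by simp)
  have hhtd : Differentiable ℝ (h t) := hht.differentiable (by simp)
  have hbtd : Differentiable ℝ (b t) := hbt.differentiable (by simp)
  -- differentiability in time
  have hptime : DifferentiableAt ℝ (fun s => p s x) t :=
    ((hp_smooth.differentiable (by simp)).comp
      (differentiable_id.prodMk (differentiable_const x))).differentiableAt
  have hhtime : DifferentiableAt ℝ (fun s => h s x) t :=
    ((hh.differentiable (by simp)).comp
      (differentiable_id.prodMk (differentiable_const x))).differentiableAt
  -- expand the Fokker–Planck equation for p
  have hp1 := hpFP t htT x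
  rw [divergSmul (p t) (b t) hptd hbtd x] at hp1
  simp only [laplacian] at hp1
  -- expand the Fokker–Planck equation for q
  have hq1 := hqFP t htT x
  simp only [hq_eq] at hq1
  rw [divergSmul (fun y => h t y * p t y) (b t)
      (fun y => (hhtd y).mul (hptd y)) hbtd x] at hq1
  simp only [laplacian] at hq1
  rw [deriv_fun_mul hhtime hptime] at hq1
  have e1 : (∑ i : Fin n, fderiv ℝ (fun y => h t y * p t y) x (EuclideanSpace.single i (1 : ℝ))
        * b t x i)
      = p t x * (∑ i : Fin n, fderiv ℝ (h t) x (EuclideanSpace.single i (1 : ℝ)) * b t x i)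
        + h t x * (∑ i : Fin n, fderiv ℝ (p t) x (EuclideanSpace.single i (1 : ℝ)) * b t x i) := by
    rw [Finset.mul_sum, Finset.mul_sum, ← Finset.sum_add_distrib]
    refine Finset.sum_congr rfl fun i _ => ?_
    rw [fderivMulApply (h t) (p t) (hhtd x) (hptd x)]
    ring
  have e2 : (∑ i : Fin n, fderiv ℝ
        (fun y => fderiv ℝ (fun y => h t y * p t y) y (EuclideanSpace.single i (1 : ℝ))) x
        (EuclideanSpace.single i (1 : ℝ)))
      = (∑ i : Fin n, fderiv ℝ (fun y => fderiv ℝ (h t) y (EuclideanSpace.single i (1 : ℝ))) x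
            (EuclideanSpace.single i (1 : ℝ))) * p t x
        + 2 * (∑ i : Fin n, fderiv ℝ (h t) x (EuclideanSpace.single i (1 : ℝ))
            * fderiv ℝ (p t) x (EuclideanSpace.single i (1 : ℝ)))
        + h t x * (∑ i : Fin n, fderiv ℝ
            (fun y => fderiv ℝ (p t) y (EuclideanSpace.single i (1 : ℝ))) x
            (EuclideanSpace.single i (1 : ℝ))) := by
    rw [Finset.sum_mul, Finset.mul_sum, Finset.mul_sum, ← Finset.sum_add_distrib,
      ← Finset.sum_add_distrib]
    refine Finset.sum_congr rfl fun i _ => ?_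
    exact secondMul (h t) (p t) hht hpt x (EuclideanSpace.single i (1 : ℝ))
  rw [e1, e2] at hq1
  -- expand the goal
  have hinner : ⟪b t x - σ ^ 2 • gradient (fun y => Real.log (p t y)) x, gradient (h t) x⟫
      = (∑ i : Fin n, fderiv ℝ (h t) x (EuclideanSpace.single i (1 : ℝ)) * b t x i)
        - σ ^ 2 * ((p t x)⁻¹ *
          (∑ i : Fin n, fderiv ℝ (h t) x (EuclideanSpace.single i (1 : ℝ))
            * fderiv ℝ (p t) x (EuclideanSpace.single i (1 : ℝ)))) := by
    rw [PiLp.inner_apply]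
    have hcongr : ∀ i ∈ Finset.univ,
        (⟪(b t x - σ ^ 2 • gradient (fun y => Real.log (p t y)) x) i,
          gradient (h t) x i⟫ : ℝ)
          = fderiv ℝ (h t) x (EuclideanSpace.single i (1 : ℝ)) * b t x i
            - σ ^ 2 * ((p t x)⁻¹ * (fderiv ℝ (h t) x (EuclideanSpace.single i (1 : ℝ))
              * fderiv ℝ (p t) x (EuclideanSpace.single i (1 : ℝ)))) := by
      intro i _
      simp only [RCLike.inner_apply, conj_trivial, PiLp.sub_apply, PiLp.smul_apply,
        smul_eq_mul]
      rw [gradCoord (fun y => Real.log (p t y)) x i, gradCoord (h t) x i,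
        fderivLogApply (p t) x (EuclideanSpace.single i (1 : ℝ)) (hptd x) hPx]
      ring
    rw [Finset.sum_congr rfl hcongr, Finset.sum_sub_distrib, ← Finset.mul_sum,
      ← Finset.mul_sum]
  rw [hinner]
  simp only [laplacian]
  have hinv : p t x * (p t x)⁻¹ = 1 := mul_inv_cancel₀ hPx
  refine mul_left_cancel₀ hPx ?_
  rw [mul_zero]
  linear_combination hq1 - h t x * hp1
    - σ ^ 2 * (∑ i : Fin n, fderiv ℝ (h t) x (EuclideanSpace.single i (1 : ℝ))
        * fderiv ℝ (p t) x (EuclideanSpace.single i (1 : ℝ))) * hinv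

theorem ratio_reverse_time_harmonic (n : ℕ) (T : ℝ) (hT : 0 < T) (σ : ℝ) (hσ : 0 < σ)
    (b : ℝ → EuclideanSpace ℝ (Fin n) → EuclideanSpace ℝ (Fin n))
    (p q : ℝ → EuclideanSpace ℝ (Fin n) → ℝ)
    (hb : ContDiff ℝ (⊤ : ℕ∞) (Function.uncurry b))
    (hp_smooth : ContDiff ℝ (⊤ : ℕ∞) (Function.uncurry p))
    (hq_smooth : ContDiff ℝ (⊤ : ℕ∞) (Function.uncurry q))
    (hp_pos : ∀ t x, 0 < p t x) (hq_pos : ∀ t x, 0 < q t x)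
    (hpFP : ∀ t ∈ Set.Icc 0 T, ∀ x,
      deriv (fun s => p s x) t + diverg (fun y => p t y • b t y) x -
        (σ ^ 2 / 2) * laplacian (p t) x = 0)
    (hqFP : ∀ t ∈ Set.Icc 0 T, ∀ x,
      deriv (fun s => q s x) t + diverg (fun y => q t y • b t y) x -
        (σ ^ 2 / 2) * laplacian (q t) x = 0) :
    ∀ t ∈ Set.Icc 0 T, ∀ x,
      deriv (fun s => q s x / p s x) t +
          ⟪b t x - σ ^ 2 • gradient (fun y => Real.log (p t y)) x,
            gradient (fun y => q t y / p t y) x⟫ -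
          (σ ^ 2 / 2) * laplacian (fun y => q t y / p t y) x = 0 := by
  have hh : ContDiff ℝ (⊤ : ℕ∞) (Function.uncurry fun s y => q s y / p s y) :=
    hq_smooth.div hp_smooth fun z => (hp_pos z.1 z.2).ne'
  have hq_eq : q = fun s y => (fun s y => q s y / p s y) s y * p s y := by
    funext s y
    exact (div_mul_cancel₀ _ (hp_pos s y).ne').symm
  exact ratio_aux T σ b p q (fun s y => q s y / p s y) hb hp_smooth hh hp_pos hq_eq hpFP hqFP

end
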